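/- arXiv:1809.09789 — 3 statements merged into one kernel-verified Lean document; each statement's English description precedes it below -/
import Mathlib

section
/- Let n ≥ 1 and let X₁ and X₂ be countable, uniformly discrete subsets of ℝⁿ, and let r > 0. Then there exists a bijection b : X₁ → X₂ satisfying ‖b(x) − x‖ ≤ r for all x ∈ X₁ if and only if for every compact set U ⊆ ℝⁿ, the number of points of X₁ in the closed r-neighborhood U_r is at least the number of points of X₂ in U, and the number of points of X₂ in U_r is at least the number of points of X₁ in U. -/
/-!
Both directions are counting arguments on the bipartite "distance at most `r`" graph between `X₁`
and `X₂`. A bounded transport maps `X₂ ∩ U` injectively into `X₁ ∩ U_r`. Conversely, uniform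
discreteness makes every vertex of that graph have finite degree, so Hall's theorem for infinite
families with finite neighbourhoods turns the counting conditions on finite sets `U` into
injections `X₁ → X₂` and `X₂ → X₁` moving points at most `r`, and the Schröder–Bernstein
construction, which keeps every pair it uses an edge of the graph, combines them into a bijection.
-/

open Set Function Metric

section

variable {E : Type*} [MetricSpace E]

lemma isDiscrete_of_pairwise_le_dist {X : Set E} {δ : ℝ} (hδ : 0 < δ)
    (hX : X.Pairwise fun x y ↦ δ ≤ dist x y) : IsDiscrete X := by
  refine isDiscrete_iff_forall_mem_exists_isOpen.mpr fun x hx ↦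
    ⟨ball x δ, isOpen_ball, Subset.antisymm (fun y ⟨hyx, hyX⟩ ↦ ?_) ?_⟩
  · by_contra hne
    exact (mem_ball.mp hyx).not_ge (hX hyX hx hne)
  · exact singleton_subset_iff.mpr ⟨mem_ball_self hδ, hx⟩

lemma finite_inter_of_pairwise_le_dist [ProperSpace E] {X K : Set E} {δ : ℝ} (hδ : 0 < δ)
    (hX : X.Pairwise fun x y ↦ δ ≤ dist x y) (hK : Bornology.IsBounded K) : (X ∩ K).Finite :=
  inter_comm K X ▸ finite_isBounded_inter_isClosed (isDiscrete_of_pairwise_le_dist hδ hX) hK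
    (isClosed_of_pairwise_le_dist hδ hX)

lemma ncard_inter_le_ncard_inter_cthickening {A B U : Set E} {r : ℝ} (f : B → A)
    (hf : Injective f) (hfr : ∀ y, dist (f y : E) y ≤ r) (hA : (A ∩ cthickening r U).Finite) :
    (B ∩ U).ncard ≤ (A ∩ cthickening r U).ncard := by
  have : Finite ↥(A ∩ cthickening r U) := hA
  rw [← Nat.card_coe_set_eq, ← Nat.card_coe_set_eq]
  refine Nat.card_le_card_of_injective
    (fun y ↦ ⟨f ⟨y, y.2.1⟩, (f _).2, mem_cthickening_of_dist_le _ (y : E) _ _ y.2.2 (hfr _)⟩) ?_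
  rintro ⟨y, hyB, _⟩ ⟨z, hzB, _⟩ hyz
  have hfyz : f ⟨y, hyB⟩ = f ⟨z, hzB⟩ := Subtype.ext (Subtype.mk.inj hyz)
  exact Subtype.ext (Subtype.mk.inj (hf hfyz))

theorem exists_injective_dist_le_of_forall_ncard_le {A B : Set E} {r : ℝ} (hr : 0 ≤ r)
    (hB : ∀ x, (B ∩ closedBall x r).Finite)
    (hAB : ∀ U : Set E, U.Finite → (A ∩ U).ncard ≤ (B ∩ cthickening r U).ncard) :
    ∃ f : A → B, Injective f ∧ ∀ x, dist (f x : E) x ≤ r := by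
  classical
  let t (x : A) : Finset B := ((hB x).preimage Subtype.val_injective.injOn).toFinset
  have mem_t (x : A) (y : B) : y ∈ t x ↔ dist (y : E) x ≤ r := by simp [t]
  have hall (s : Finset A) : s.card ≤ (s.biUnion t).card := by
    set U : Set E := Subtype.val '' (s : Set A)
    have hU : U.Finite := s.finite_toSet.image _
    have hAU : (A ∩ U).ncard = s.card := by
      rw [inter_eq_self_of_subset_right (Subtype.coe_image_subset _ _),
        ncard_image_of_injective _ Subtype.val_injective, ncard_coe_finset]
    have hBU : B ∩ cthickening r U ⊆ Subtype.val '' (s.biUnion t : Set B) := by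
      rintro y ⟨hyB, hyU⟩
      rw [hU.isCompact.cthickening_eq_biUnion_closedBall hr] at hyU
      obtain ⟨_, ⟨x, hxs, rfl⟩, hyx⟩ := mem_iUnion₂.mp hyU
      exact ⟨⟨y, hyB⟩, Finset.mem_biUnion.mpr ⟨x, hxs, (mem_t x _).mpr hyx⟩, rfl⟩
    calc s.card = (A ∩ U).ncard := hAU.symm
      _ ≤ (B ∩ cthickening r U).ncard := hAB U hU
      _ ≤ (Subtype.val '' (s.biUnion t : Set B)).ncard :=
        ncard_le_ncard hBU ((s.biUnion t).finite_toSet.image _)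
      _ = (s.biUnion t).card := by
        rw [ncard_image_of_injective _ Subtype.val_injective, ncard_coe_finset]
  obtain ⟨f, hf, hft⟩ := (Finset.all_card_le_biUnion_card_iff_exists_injective t).mp hall
  exact ⟨f, hf, fun x ↦ (mem_t x (f x)).mp (hft x)⟩

theorem exists_equiv_dist_le_of_forall_ncard_le {A B : Set E} {r : ℝ} (hr : 0 ≤ r)
    (hA : ∀ x, (A ∩ closedBall x r).Finite) (hB : ∀ x, (B ∩ closedBall x r).Finite)
    (hAB : ∀ U : Set E, U.Finite → (A ∩ U).ncard ≤ (B ∩ cthickening r U).ncard)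
    (hBA : ∀ U : Set E, U.Finite → (B ∩ U).ncard ≤ (A ∩ cthickening r U).ncard) :
    ∃ e : A ≃ B, ∀ x, dist (e x : E) x ≤ r := by
  obtain ⟨f, hf, hfr⟩ := exists_injective_dist_le_of_forall_ncard_le hr hB hAB
  obtain ⟨g, hg, hgr⟩ := exists_injective_dist_le_of_forall_ncard_le hr hA hBA
  obtain ⟨e, he, her⟩ := Embedding.schroeder_bernstein_of_rel hf hg
    (fun x y ↦ dist (y : E) x ≤ r) hfr fun y ↦ dist_comm (y : E) _ ▸ hgr y
  exact ⟨Equiv.ofBijective e he, her⟩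

end

theorem hall_marriage_bounded_transport_general
    (n : ℕ)
    (X₁ X₂ : Set (EuclideanSpace ℝ (Fin n)))
    (hX₁ud : ∃ δ > 0, ∀ x ∈ X₁, ∀ y ∈ X₁, x ≠ y → δ ≤ dist x y)
    (hX₂ud : ∃ δ > 0, ∀ x ∈ X₂, ∀ y ∈ X₂, x ≠ y → δ ≤ dist x y)
    (r : ℝ) (hr : 0 < r) :
    (∃ b : X₁ ≃ X₂, ∀ x : X₁,
        ‖(b x : EuclideanSpace ℝ (Fin n)) - (x : EuclideanSpace ℝ (Fin n))‖ ≤ r) ↔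
    (∀ U : Set (EuclideanSpace ℝ (Fin n)), IsCompact U →
        (X₂ ∩ U).ncard ≤ (X₁ ∩ Metric.cthickening r U).ncard ∧
        (X₁ ∩ U).ncard ≤ (X₂ ∩ Metric.cthickening r U).ncard) := by
  obtain ⟨δ₁, hδ₁, hX₁⟩ := hX₁ud
  obtain ⟨δ₂, hδ₂, hX₂⟩ := hX₂ud
  have hfin₁ {K} (hK : Bornology.IsBounded K) := finite_inter_of_pairwise_le_dist hδ₁ hX₁ hK
  have hfin₂ {K} (hK : Bornology.IsBounded K) := finite_inter_of_pairwise_le_dist hδ₂ hX₂ hK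
  simp only [← dist_eq_norm]
  constructor
  · rintro ⟨b, hb⟩ U hU
    have hb_symm (y : X₂) : dist (b.symm y : EuclideanSpace ℝ (Fin n)) y ≤ r := by
      simpa [dist_comm] using hb (b.symm y)
    exact ⟨ncard_inter_le_ncard_inter_cthickening b.symm b.symm.injective hb_symm
        (hfin₁ hU.isBounded.cthickening),
      ncard_inter_le_ncard_inter_cthickening b b.injective hb (hfin₂ hU.isBounded.cthickening)⟩
  · intro H
    exact exists_equiv_dist_le_of_forall_ncard_le hr.le
      (fun _ ↦ hfin₁ isBounded_closedBall) (fun _ ↦ hfin₂ isBounded_closedBall)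
      (fun U hU ↦ (H U hU.isCompact).2) (fun U hU ↦ (H U hU.isCompact).1)

/-- **Hall Marriage Theorem for bounded transport** (Theorem 1.1 of the paper).
For countable, uniformly discrete sets `X₁, X₂ ⊆ ℝⁿ` and `r > 0`, there is a bijection
`b : X₁ → X₂` with `‖b x - x‖ ≤ r` iff for every compact `U`, the number of points of `X₁`
in the closed `r`-neighborhood of `U` is at least the number of points of `X₂` in `U`,
and vice versa. -/
theorem hall_marriage_bounded_transport
    (n : ℕ) (hn : 1 ≤ n)
    (X₁ X₂ : Set (EuclideanSpace ℝ (Fin n)))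
    (hX₁count : X₁.Countable) (hX₂count : X₂.Countable)
    (hX₁ud : ∃ δ > 0, ∀ x ∈ X₁, ∀ y ∈ X₁, x ≠ y → δ ≤ dist x y)
    (hX₂ud : ∃ δ > 0, ∀ x ∈ X₂, ∀ y ∈ X₂, x ≠ y → δ ≤ dist x y)
    (r : ℝ) (hr : 0 < r) :
    (∃ b : X₁ ≃ X₂, ∀ x : X₁,
        ‖(b x : EuclideanSpace ℝ (Fin n)) - (x : EuclideanSpace ℝ (Fin n))‖ ≤ r) ↔
    (∀ U : Set (EuclideanSpace ℝ (Fin n)), IsCompact U →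
        (X₂ ∩ U).ncard ≤ (X₁ ∩ Metric.cthickening r U).ncard ∧
        (X₁ ∩ U).ncard ≤ (X₂ ∩ Metric.cthickening r U).ncard) :=
  hall_marriage_bounded_transport_general n X₁ X₂ hX₁ud hX₂ud r hr
end

section
/- Let n ≥ 1 and let X₁ and X₂ be countable, uniformly discrete subsets of ℝⁿ, and let r > 0. Then there exists an injection b : X₁ → X₂ satisfying ‖b(x) − x‖ ≤ r for all x ∈ X₁ if and only if for every compact set U ⊆ ℝⁿ, the number of points of X₂ in the closed r-neighborhood U_r is at least the number of points of X₁ in U. -/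
open Metric Set

/-- A uniformly discrete set meets every compact set in a finite set. -/
lemma ud_inter_compact_finite {E : Type*} [MetricSpace E] {X : Set E} {δ : ℝ}
    (hδ : 0 < δ) (hud : ∀ x ∈ X, ∀ y ∈ X, x ≠ y → δ ≤ dist x y)
    {K : Set E} (hK : IsCompact K) : (X ∩ K).Finite := by
  obtain ⟨t, htf, hcov⟩ := (Metric.totallyBounded_iff.mp hK.totallyBounded) (δ/2) (by linarith)
  have hsub : X ∩ K ⊆ ⋃ y ∈ t, X ∩ Metric.ball y (δ/2) := by
    intro x hx
    obtain ⟨y, hy, hxy⟩ := Set.mem_iUnion₂.mp (hcov hx.2)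
    exact Set.mem_iUnion₂.mpr ⟨y, hy, hx.1, hxy⟩
  refine Set.Finite.subset (htf.biUnion fun y _ => ?_) hsub
  apply Set.Subsingleton.finite
  intro a ha b hb
  by_contra hne
  have h1 := hud a ha.1 b hb.1 hne
  have h2 := Metric.mem_ball.mp ha.2
  have h3 := Metric.mem_ball.mp hb.2
  have hab : dist a b < δ := by
    calc dist a b ≤ dist a y + dist y b := dist_triangle _ _ _
    _ < δ/2 + δ/2 := by rw [dist_comm y b]; linarith
    _ = δ := by ring
  linarith

/-- **Hall-marriage half of the bounded-transport criterion** (injection version of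
Theorem 1.1 of the paper). For countable, uniformly discrete sets `X₁, X₂ ⊆ ℝⁿ` and `r > 0`,
there is an injection `b : X₁ → X₂` with `‖b x - x‖ ≤ r` iff for every compact `U`,
the number of points of `X₂` in the closed `r`-neighborhood of `U` is at least the number
of points of `X₁` in `U`. -/
theorem hall_marriage_bounded_injection
    (n : ℕ) (hn : 1 ≤ n)
    (X₁ X₂ : Set (EuclideanSpace ℝ (Fin n)))
    (hX₁count : X₁.Countable) (hX₂count : X₂.Countable)
    (hX₁ud : ∃ δ > 0, ∀ x ∈ X₁, ∀ y ∈ X₁, x ≠ y → δ ≤ dist x y)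
    (hX₂ud : ∃ δ > 0, ∀ x ∈ X₂, ∀ y ∈ X₂, x ≠ y → δ ≤ dist x y)
    (r : ℝ) (hr : 0 < r) :
    (∃ b : X₁ → X₂, Function.Injective b ∧ ∀ x : X₁,
        ‖(b x : EuclideanSpace ℝ (Fin n)) - (x : EuclideanSpace ℝ (Fin n))‖ ≤ r) ↔
    (∀ U : Set (EuclideanSpace ℝ (Fin n)), IsCompact U →
        (X₁ ∩ U).ncard ≤ (X₂ ∩ Metric.cthickening r U).ncard) := by
  classical
  obtain ⟨δ₂, hδ₂, hud₂⟩ := hX₂ud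
  constructor
  · rintro ⟨b, hbinj, hbd⟩ U hU
    have htfin : (X₂ ∩ Metric.cthickening r U).Finite :=
      ud_inter_compact_finite hδ₂ hud₂ hU.cthickening
    refine Set.ncard_le_ncard_of_injOn
      (fun x => if h : x ∈ X₁ then (b ⟨x, h⟩ : EuclideanSpace ℝ (Fin n)) else x) ?_ ?_ htfin
    · intro a ha
      simp only [dif_pos ha.1]
      refine ⟨(b ⟨a, ha.1⟩).2, Metric.closedBall_subset_cthickening ha.2 r ?_⟩
      rw [Metric.mem_closedBall, dist_eq_norm]
      exact hbd ⟨a, ha.1⟩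
    · intro a ha c hc hac
      simp only [dif_pos ha.1, dif_pos hc.1] at hac
      have := hbinj (Subtype.ext hac)
      exact congrArg Subtype.val this
  · intro h
    have hfin : ∀ x : X₁, {y : X₂ | dist (y : EuclideanSpace ℝ (Fin n)) (x : EuclideanSpace ℝ (Fin n)) ≤ r}.Finite := by
      intro x
      have hf : (X₂ ∩ Metric.closedBall (x : EuclideanSpace ℝ (Fin n)) r).Finite :=
        ud_inter_compact_finite hδ₂ hud₂ (isCompact_closedBall _ _)
      have hpre : ((Subtype.val : X₂ → EuclideanSpace ℝ (Fin n)) ⁻¹' (X₂ ∩ Metric.closedBall (x : EuclideanSpace ℝ (Fin n)) r)).Finite :=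
        hf.preimage Subtype.coe_injective.injOn
      refine Set.Finite.subset hpre ?_
      intro y hy
      exact ⟨y.2, Metric.mem_closedBall.mpr hy⟩
    set t : X₁ → Finset X₂ := fun x => (hfin x).toFinset with ht
    have hall : ∀ s : Finset X₁, s.card ≤ (s.biUnion t).card := by
      intro s
      set U : Set (EuclideanSpace ℝ (Fin n)) := Subtype.val '' (↑s : Set X₁) with hUdef
      have hUfin : U.Finite := (s.finite_toSet.image _)
      have hUc : IsCompact U := hUfin.isCompact
      have key := h U hUc
      have hUsub : U ⊆ X₁ := by rintro _ ⟨y, _, rfl⟩; exact y.2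
      have hXU : X₁ ∩ U = U := Set.inter_eq_self_of_subset_right hUsub
      have hcard1 : (X₁ ∩ U).ncard = s.card := by
        rw [hXU, hUdef, Set.ncard_image_of_injective _ Subtype.coe_injective,
          Set.ncard_coe_finset]
      have hthick : Metric.cthickening r U = ⋃ x ∈ U, Metric.closedBall x r :=
        hUc.cthickening_eq_biUnion_closedBall hr.le
      have hset : X₂ ∩ Metric.cthickening r U = Subtype.val '' (↑(s.biUnion t) : Set X₂) := by
        ext y
        simp only [hthick, Set.mem_inter_iff, Set.mem_iUnion, Metric.mem_closedBall,
          Set.mem_image, Finset.coe_biUnion, Finset.mem_coe]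
        constructor
        · rintro ⟨hy2, u, hu, hdu⟩
          obtain ⟨x, hxs, rfl⟩ := hu
          exact ⟨⟨y, hy2⟩, ⟨x, hxs, (hfin x).mem_toFinset.mpr hdu⟩, rfl⟩
        · rintro ⟨y', hy', rfl⟩
          obtain ⟨x, hxs, hyx⟩ := hy'
          have hd : dist (y' : EuclideanSpace ℝ (Fin n)) (x : EuclideanSpace ℝ (Fin n)) ≤ r :=
            (hfin x).mem_toFinset.mp hyx
          exact ⟨y'.2, x, ⟨x, hxs, rfl⟩, hd⟩
      have hcard2 : (X₂ ∩ Metric.cthickening r U).ncard = (s.biUnion t).card := by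
        rw [hset, Set.ncard_image_of_injective _ Subtype.coe_injective, Set.ncard_coe_finset]
      rw [hcard1, hcard2] at key
      exact key
    obtain ⟨f, hfinj, hft⟩ := (Finset.all_card_le_biUnion_card_iff_exists_injective t).mp hall
    refine ⟨f, hfinj, fun x => ?_⟩
    rw [← dist_eq_norm]
    exact (hfin x).mem_toFinset.mp (hft x)
end

section
/- Let n ≥ 1, let X₁ and X₂ be Delone subsets of ℝⁿ, let R > 0, let R' > 0, and let ρ : ℝⁿ → [0,∞) be a continuous function supported in the closed ball of radius R about the origin with ∫_{ℝⁿ} ρ = 1. For i = 1, 2 define f_i(x) = ∑_{x' ∈ X_i} ρ(x − x') (a finite sum for each x, since X_i is uniformly discrete). Suppose b₀ : X₁ × X₂ → [0,1] satisfies: ∑_{y' ∈ X₂} b₀(x', y') = 1 for every x' ∈ X₁; ∑_{x' ∈ X₁} b₀(x', y') = 1 for every y' ∈ X₂; and b₀(x', y') = 0 whenever ‖x' − y'‖ > R'. Then the function b(x,y) = ∑_{x' ∈ X₁} ∑_{y' ∈ X₂} ρ(x − x') ρ(y − y') b₀(x', y') is well defined (for each (x,y) only finitely many terms are nonzero), and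 satisfies: ∫_{ℝⁿ} b(x,y) dy = f₁(x) for every x ∈ ℝⁿ; ∫_{ℝⁿ} b(x,y) dx = f₂(y) for every y ∈ ℝⁿ; and b(x,y) = 0 whenever ‖x − y‖ > 2R + R'. -/
/-!
Uniform discreteness makes `X₁` and `X₂` locally finite, so for fixed `x` only finitely many
`x'` have `ρ (x - x') ≠ 0`, and since `b₀` vanishes at distance `> R'` every row and column of
`b₀` is finitely supported. All sums are therefore finite: integrating in `y` replaces each
`ρ (y - y')` by `∫ ρ = 1`, and the row sums of `b₀` then leave `∑ ρ (x - x') = f₁ x`. The second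
marginal is the first one for the transposed kernel, and the support bound is the triangle
inequality along `x, x', y', y`.
-/

open MeasureTheory Metric Set Function

theorem finite_inter_of_le_dist_of_totallyBounded {X : Type*} [PseudoMetricSpace X]
    {S A : Set X} {δ : ℝ} (hδ : 0 < δ) (hS : ∀ x ∈ S, ∀ y ∈ S, x ≠ y → δ ≤ dist x y)
    (hA : TotallyBounded A) : (S ∩ A).Finite := by
  obtain ⟨t, ht, hcover⟩ := totallyBounded_iff.1 hA (δ / 2) (half_pos hδ)
  refine (ht.biUnion fun z _ => Subsingleton.finite (s := S ∩ ball z (δ / 2)) ?_).subset ?_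
  · intro x hx y hy
    by_contra hne
    have hδxy := hS x hx.1 y hy.1 hne
    have := dist_triangle_right x y z
    linarith [mem_ball.1 hx.2, mem_ball.1 hy.2]
  · rintro x ⟨hxS, hxA⟩
    obtain ⟨z, hz, hxz⟩ := mem_iUnion₂.1 (hcover hxA)
    exact mem_biUnion hz ⟨hxS, hxz⟩

theorem finite_setOf_dist_le_of_le_dist {X : Type*} [PseudoMetricSpace X] [ProperSpace X]
    {S : Set X} {δ : ℝ} (hδ : 0 < δ) (hS : ∀ x ∈ S, ∀ y ∈ S, x ≠ y → δ ≤ dist x y)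
    (c : X) (r : ℝ) : {p : S | dist c p ≤ r}.Finite :=
  ((finite_inter_of_le_dist_of_totallyBounded hδ hS
    (isCompact_closedBall c r).totallyBounded).preimage Subtype.val_injective.injOn).subset
    fun p hp => ⟨p.2, mem_closedBall'.2 hp⟩

theorem finite_support_comp_sub_of_le_dist {E : Type*} [NormedAddCommGroup E] [ProperSpace E]
    {S : Set E} {δ : ℝ} (hδ : 0 < δ) (hS : ∀ x ∈ S, ∀ y ∈ S, x ≠ y → δ ≤ dist x y)
    {ρ : E → ℝ} {R : ℝ} (hρ : ∀ x, ρ x ≠ 0 → ‖x‖ ≤ R) (x : E) :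
    (support fun p : S => ρ (x - p)).Finite :=
  (finite_setOf_dist_le_of_le_dist hδ hS x R).subset fun p hp => by
    simpa [dist_eq_norm] using hρ _ hp

section SmoothedKernel

variable {G ι κ : Type*}

/-- The paper's `b`, for points indexed by `ι` and `κ` and the point kernel `k = b₀`. -/
noncomputable def smoothedKernel [Sub G] (ρ : G → ℝ) (u : ι → G) (v : κ → G) (k : ι → κ → ℝ)
    (x y : G) : ℝ :=
  ∑' p : ι × κ, ρ (x - u p.1) * ρ (y - v p.2) * k p.1 p.2

theorem smoothedKernel_comm [Sub G] (ρ : G → ℝ) (u : ι → G) (v : κ → G) (k : ι → κ → ℝ)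
    (x y : G) : smoothedKernel ρ u v k x y = smoothedKernel ρ v u (fun j i => k i j) y x := by
  rw [smoothedKernel, smoothedKernel, ← (Equiv.prodComm κ ι).tsum_eq]
  exact tsum_congr fun p => by simp only [Equiv.prodComm_apply, Prod.fst_swap, Prod.snd_swap]; ring

theorem smoothedKernel_eq_zero_of_lt_norm_sub [SeminormedAddCommGroup G] {ρ : G → ℝ} {R R' : ℝ}
    (hρ : ∀ x, ρ x ≠ 0 → ‖x‖ ≤ R) {u : ι → G} {v : κ → G} {k : ι → κ → ℝ}
    (hk : ∀ i j, R' < ‖u i - v j‖ → k i j = 0) {x y : G} (hxy : 2 * R + R' < ‖x - y‖) :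
    smoothedKernel ρ u v k x y = 0 := by
  refine (tsum_congr fun p => ?_).trans tsum_zero
  by_contra hne
  simp only [mul_eq_zero, not_or] at hne
  obtain ⟨⟨hx, hy⟩, hk'⟩ := hne
  have hxu := hρ _ hx
  have hyv := hρ _ hy
  have huv := not_lt.1 (mt (hk p.1 p.2) hk')
  have := norm_sub_le_norm_sub_add_norm_sub x (u p.1) y
  have := norm_sub_le_norm_sub_add_norm_sub (u p.1) (v p.2) y
  rw [norm_sub_rev (v p.2)] at this
  linarith

variable [MeasurableSpace G] [AddGroup G] [MeasurableAdd G] {μ : Measure G}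
  [μ.IsAddRightInvariant]

theorem integral_tsum_mul_comp_sub {ρ : G → ℝ} (hρ : ∫ y, ρ y ∂μ = 1) (v : ι → G) {a : ι → ℝ}
    (ha : (support a).Finite) : ∫ y, ∑' i, a i * ρ (y - v i) ∂μ = ∑' i, a i := by
  have hρint : Integrable ρ μ := Integrable.of_integral_ne_zero (by simp [hρ])
  have hvanish : ∀ i ∉ ha.toFinset, a i = 0 := by simp
  calc ∫ y, ∑' i, a i * ρ (y - v i) ∂μ
      = ∫ y, ∑ i ∈ ha.toFinset, a i * ρ (y - v i) ∂μ :=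
        integral_congr_ae (.of_forall fun y => tsum_eq_sum fun i hi => by simp [hvanish i hi])
    _ = ∑ i ∈ ha.toFinset, a i * ∫ y, ρ (y - v i) ∂μ := by
        rw [integral_finsetSum _ fun i _ => (hρint.comp_sub_right (v i)).const_mul (a i)]
        simp only [integral_const_mul]
    _ = ∑' i, a i := by
        simp only [integral_sub_right_eq_self, hρ, mul_one]
        exact (tsum_eq_sum hvanish).symm

theorem integral_smoothedKernel_right {ρ : G → ℝ} (hρ : ∫ y, ρ y ∂μ = 1) {u : ι → G} {v : κ → G}
    {k : ι → κ → ℝ} (hk : ∀ i, (support (k i)).Finite) (hrow : ∀ i, ∑' j, k i j = 1) {x : G}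
    (hx : (support fun i => ρ (x - u i)).Finite) :
    ∫ y, smoothedKernel ρ u v k x y ∂μ = ∑' i, ρ (x - u i) := by
  set a : ι × κ → ℝ := fun p => ρ (x - u p.1) * k p.1 p.2
  have ha : (support a).Finite := by
    refine (hx.biUnion fun i _ => (finite_singleton i).prod (hk i)).subset fun p hp => ?_
    simp only [mem_support, ne_eq, mul_eq_zero, not_or, a] at hp
    exact mem_biUnion hp.1 ⟨rfl, hp.2⟩
  calc ∫ y, smoothedKernel ρ u v k x y ∂μ = ∫ y, ∑' p, a p * ρ (y - v p.2) ∂μ := by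
        simp only [smoothedKernel, a, mul_right_comm]
    _ = ∑' p, a p := integral_tsum_mul_comp_sub hρ _ ha
    _ = ∑' i, ∑' j, ρ (x - u i) * k i j :=
        (summable_of_hasFiniteSupport ha).tsum_prod' fun i =>
          summable_of_hasFiniteSupport ((hk i).subset (support_mul_subset_right _ _))
    _ = ∑' i, ρ (x - u i) := by simp only [tsum_mul_left, hrow, mul_one]

theorem integral_smoothedKernel_left {ρ : G → ℝ} (hρ : ∫ y, ρ y ∂μ = 1) {u : ι → G} {v : κ → G}
    {k : ι → κ → ℝ} (hk : ∀ j, (support fun i => k i j).Finite) (hcol : ∀ j, ∑' i, k i j = 1)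
    {y : G} (hy : (support fun j => ρ (y - v j)).Finite) :
    ∫ x, smoothedKernel ρ u v k x y ∂μ = ∑' j, ρ (y - v j) := by
  simp only [smoothedKernel_comm ρ u v k]
  exact integral_smoothedKernel_right hρ hk hcol hy

end SmoothedKernel

theorem smoothed_bounded_transport_general
    (n : ℕ)
    (X₁ X₂ : Set (EuclideanSpace ℝ (Fin n)))
    (hX₁ud : ∃ δ > 0, ∀ x ∈ X₁, ∀ y ∈ X₁, x ≠ y → δ ≤ dist x y)
    (hX₂ud : ∃ δ > 0, ∀ x ∈ X₂, ∀ y ∈ X₂, x ≠ y → δ ≤ dist x y)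
    (R R' : ℝ)
    (ρ : EuclideanSpace ℝ (Fin n) → ℝ)
    (hρsupp : ∀ x, ρ x ≠ 0 → ‖x‖ ≤ R)
    (hρint : (∫ x, ρ x) = 1)
    (b₀ : X₁ → X₂ → ℝ)
    (hrow : ∀ x' : X₁, (∑' y' : X₂, b₀ x' y') = 1)
    (hcol : ∀ y' : X₂, (∑' x' : X₁, b₀ x' y') = 1)
    (hvanish : ∀ (x' : X₁) (y' : X₂),
      R' < ‖(x' : EuclideanSpace ℝ (Fin n)) - (y' : EuclideanSpace ℝ (Fin n))‖ →
      b₀ x' y' = 0) :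
    (∀ x : EuclideanSpace ℝ (Fin n),
      {x' : X₁ | ρ (x - (x' : EuclideanSpace ℝ (Fin n))) ≠ 0}.Finite) ∧
    (∀ y : EuclideanSpace ℝ (Fin n),
      {y' : X₂ | ρ (y - (y' : EuclideanSpace ℝ (Fin n))) ≠ 0}.Finite) ∧
    (∀ x y : EuclideanSpace ℝ (Fin n),
      {p : X₁ × X₂ | ρ (x - (p.1 : EuclideanSpace ℝ (Fin n))) *
        ρ (y - (p.2 : EuclideanSpace ℝ (Fin n))) * b₀ p.1 p.2 ≠ 0}.Finite) ∧
    (∀ x : EuclideanSpace ℝ (Fin n),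
      (∫ y, (∑' p : X₁ × X₂, ρ (x - (p.1 : EuclideanSpace ℝ (Fin n))) *
        ρ (y - (p.2 : EuclideanSpace ℝ (Fin n))) * b₀ p.1 p.2)) =
      (∑' x' : X₁, ρ (x - (x' : EuclideanSpace ℝ (Fin n))))) ∧
    (∀ y : EuclideanSpace ℝ (Fin n),
      (∫ x, (∑' p : X₁ × X₂, ρ (x - (p.1 : EuclideanSpace ℝ (Fin n))) *
        ρ (y - (p.2 : EuclideanSpace ℝ (Fin n))) * b₀ p.1 p.2)) =
      (∑' y' : X₂, ρ (y - (y' : EuclideanSpace ℝ (Fin n))))) ∧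
    (∀ x y : EuclideanSpace ℝ (Fin n), 2 * R + R' < ‖x - y‖ →
      (∑' p : X₁ × X₂, ρ (x - (p.1 : EuclideanSpace ℝ (Fin n))) *
        ρ (y - (p.2 : EuclideanSpace ℝ (Fin n))) * b₀ p.1 p.2) = 0) := by
  obtain ⟨δ₁, hδ₁, hsep₁⟩ := hX₁ud
  obtain ⟨δ₂, hδ₂, hsep₂⟩ := hX₂ud
  have hfin₁ := finite_support_comp_sub_of_le_dist hδ₁ hsep₁ hρsupp
  have hfin₂ := finite_support_comp_sub_of_le_dist hδ₂ hsep₂ hρsupp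
  have hrowfin (x' : X₁) : (support (b₀ x')).Finite :=
    (finite_setOf_dist_le_of_le_dist hδ₂ hsep₂ x' R').subset fun y' hy' => by
      simpa [dist_eq_norm] using not_lt.1 (mt (hvanish x' y') hy')
  have hcolfin (y' : X₂) : (support fun x' => b₀ x' y').Finite :=
    (finite_setOf_dist_le_of_le_dist hδ₁ hsep₁ y' R').subset fun x' hx' => by
      simpa [dist_eq_norm'] using not_lt.1 (mt (hvanish x' y') hx')
  refine ⟨hfin₁, hfin₂, fun x y => ((hfin₁ x).prod (hfin₂ y)).subset fun p hp =>
      have hρρ := left_ne_zero_of_mul hp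
      ⟨left_ne_zero_of_mul hρρ, right_ne_zero_of_mul hρρ⟩,
    fun x => integral_smoothedKernel_right hρint hrowfin hrow (hfin₁ x),
    fun y => integral_smoothedKernel_left hρint hcolfin hcol (hfin₂ y),
    fun x y => smoothedKernel_eq_zero_of_lt_norm_sub hρsupp hvanish⟩

/-- **Bounded transport between point sets induces bounded transport between smoothed
densities** (Theorem 3.1 of the paper). Given Delone sets `X₁, X₂ ⊆ ℝⁿ`, a bump function
`ρ` supported in a ball of radius `R` with total integral 1, and a doubly stochastic kernel
`b₀` on `X₁ × X₂` with transport distance at most `R'`, the smoothed kernel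
`b(x,y) = ∑ ρ(x-x')ρ(y-y')b₀(x',y')` is well defined (finitely many nonzero terms) and is
a transport from `f₁(x) = ∑ ρ(x-x')` to `f₂(y) = ∑ ρ(y-y')` bounded by `2R + R'`. -/
theorem smoothed_bounded_transport
    (n : ℕ) (hn : 1 ≤ n)
    (X₁ X₂ : Set (EuclideanSpace ℝ (Fin n)))
    (hX₁ud : ∃ δ > 0, ∀ x ∈ X₁, ∀ y ∈ X₁, x ≠ y → δ ≤ dist x y)
    (hX₂ud : ∃ δ > 0, ∀ x ∈ X₂, ∀ y ∈ X₂, x ≠ y → δ ≤ dist x y)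
    (hX₁rd : ∃ R₀ > (0 : ℝ), ∀ x : EuclideanSpace ℝ (Fin n), ∃ p ∈ X₁, dist x p ≤ R₀)
    (hX₂rd : ∃ R₀ > (0 : ℝ), ∀ x : EuclideanSpace ℝ (Fin n), ∃ p ∈ X₂, dist x p ≤ R₀)
    (R R' : ℝ) (hR : 0 < R) (hR' : 0 < R')
    (ρ : EuclideanSpace ℝ (Fin n) → ℝ)
    (hρcont : Continuous ρ) (hρ0 : ∀ x, 0 ≤ ρ x)
    (hρsupp : ∀ x, ρ x ≠ 0 → ‖x‖ ≤ R)
    (hρint : (∫ x, ρ x) = 1)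
    (b₀ : X₁ → X₂ → ℝ)
    (hb₀0 : ∀ x' y', 0 ≤ b₀ x' y') (hb₀1 : ∀ x' y', b₀ x' y' ≤ 1)
    (hrow : ∀ x' : X₁, (∑' y' : X₂, b₀ x' y') = 1)
    (hcol : ∀ y' : X₂, (∑' x' : X₁, b₀ x' y') = 1)
    (hvanish : ∀ (x' : X₁) (y' : X₂),
      R' < ‖(x' : EuclideanSpace ℝ (Fin n)) - (y' : EuclideanSpace ℝ (Fin n))‖ →
      b₀ x' y' = 0) :
    (∀ x : EuclideanSpace ℝ (Fin n),
      {x' : X₁ | ρ (x - (x' : EuclideanSpace ℝ (Fin n))) ≠ 0}.Finite) ∧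
    (∀ y : EuclideanSpace ℝ (Fin n),
      {y' : X₂ | ρ (y - (y' : EuclideanSpace ℝ (Fin n))) ≠ 0}.Finite) ∧
    (∀ x y : EuclideanSpace ℝ (Fin n),
      {p : X₁ × X₂ | ρ (x - (p.1 : EuclideanSpace ℝ (Fin n))) *
        ρ (y - (p.2 : EuclideanSpace ℝ (Fin n))) * b₀ p.1 p.2 ≠ 0}.Finite) ∧
    (∀ x : EuclideanSpace ℝ (Fin n),
      (∫ y, (∑' p : X₁ × X₂, ρ (x - (p.1 : EuclideanSpace ℝ (Fin n))) *
        ρ (y - (p.2 : EuclideanSpace ℝ (Fin n))) * b₀ p.1 p.2)) =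
      (∑' x' : X₁, ρ (x - (x' : EuclideanSpace ℝ (Fin n))))) ∧
    (∀ y : EuclideanSpace ℝ (Fin n),
      (∫ x, (∑' p : X₁ × X₂, ρ (x - (p.1 : EuclideanSpace ℝ (Fin n))) *
        ρ (y - (p.2 : EuclideanSpace ℝ (Fin n))) * b₀ p.1 p.2)) =
      (∑' y' : X₂, ρ (y - (y' : EuclideanSpace ℝ (Fin n))))) ∧
    (∀ x y : EuclideanSpace ℝ (Fin n), 2 * R + R' < ‖x - y‖ →
      (∑' p : X₁ × X₂, ρ (x - (p.1 : EuclideanSpace ℝ (Fin n))) *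
        ρ (y - (p.2 : EuclideanSpace ℝ (Fin n))) * b₀ p.1 p.2) = 0) :=
  smoothed_bounded_transport_general n X₁ X₂ hX₁ud hX₂ud R R' ρ hρsupp hρint b₀ hrow hcol hvanish
end
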